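/- Given any vectors x ∈ ℝⁿ, r ∈ ℝⁿ, y ∈ ℝᵐ, s ∈ ℝᵐ with x, r, y, s ≥ 0, xᵀr = 0, yᵀs = 0, and any m×n matrix A, the linear program max cᵀx' s.t. Ax' ≤ b, x' ≥ 0 with b := Ax + s and c := Aᵀy − r is feasible and bounded. -/
import Mathlib


open Matrix

/-- The constructed linear program `max cᵀx'` s.t. `Ax' ≤ b`, `x' ≥ 0`
with `b = Ax + s` and `c = Aᵀy − r` is feasible and bounded. -/
theorem constructed_lp_feasible_bounded (m n : ℕ) (A : Matrix (Fin m) (Fin n) ℝ)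
    (x r : Fin n → ℝ) (y s : Fin m → ℝ)
    (hx : 0 ≤ x) (hr : 0 ≤ r) (hy : 0 ≤ y) (hs : 0 ≤ s)
    (hxr : x ⬝ᵥ r = 0) (hys : y ⬝ᵥ s = 0)
    (b : Fin m → ℝ) (c : Fin n → ℝ)
    (hb : b = A.mulVec x + s) (hc : c = Aᵀ.mulVec y - r) :
    (∃ x' : Fin n → ℝ, 0 ≤ x' ∧ A.mulVec x' ≤ b) ∧
      (∃ M : ℝ, ∀ x' : Fin n → ℝ, 0 ≤ x' → A.mulVec x' ≤ b → c ⬝ᵥ x' ≤ M) := by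
  constructor
  · exact ⟨x, hx, by
      intro i
      simp only [hb, Pi.add_apply]
      exact le_add_of_nonneg_right (hs i)⟩
  · refine ⟨y ⬝ᵥ b, fun x' hx' hAx' => ?_⟩
    have h1 : c ⬝ᵥ x' = y ⬝ᵥ A.mulVec x' - r ⬝ᵥ x' := by
      rw [hc, sub_dotProduct, Matrix.mulVec_transpose, ← Matrix.dotProduct_mulVec]
    rw [h1]
    have h2 : y ⬝ᵥ A.mulVec x' ≤ y ⬝ᵥ b := by
      apply Finset.sum_le_sum
      intro i _
      exact mul_le_mul_of_nonneg_left (hAx' i) (hy i)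
    have h3 : 0 ≤ r ⬝ᵥ x' := Finset.sum_nonneg fun i _ => mul_nonneg (hr i) (hx' i)
    linarith
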